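/- Let ρ₁', …, ρ_p' (p ≥ 2) be predicates on {0,1} × X for a set X. For all a ∈ X: (∃ y ∈ {0,1}, ⋀_{i=1}^{p} ρᵢ'(y, a)) holds if and only if (⋀_{1 ≤ i < j ≤ p} ∃ z ∈ {0,1}, ρᵢ'(z, a) ∧ ρⱼ'(z, a)) holds. -/

import Mathlib

/-! Helly's theorem for the two-point space: if some predicate fails at `true`, every other one
must share a point with it, which can only be `false`. -/

theorem Bool.exists_forall_iff_forall_exists_and {ι : Type*} (P : ι → Bool → Prop) :
    (∃ y, ∀ i, P i y) ↔ ∀ i j, ∃ z, P i z ∧ P j z := by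
  refine ⟨fun ⟨y, hy⟩ i j => ⟨y, hy i, hy j⟩, fun h => ?_⟩
  by_cases htrue : ∀ i, P i true
  · exact ⟨true, htrue⟩
  obtain ⟨i₀, hi₀⟩ := not_forall.mp htrue
  refine ⟨false, fun j => ?_⟩
  obtain ⟨z, hz₀, hz⟩ := h i₀ j
  cases z
  · exact hz
  · exact absurd hz₀ hi₀

theorem forall_exists_and_of_forall_lt {ι β : Type*} [LinearOrder ι] [Nontrivial ι]
    {P : ι → β → Prop} (h : ∀ i j, i < j → ∃ z, P i z ∧ P j z) (i j : ι) :
    ∃ z, P i z ∧ P j z := by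
  rcases lt_trichotomy i j with hij | rfl | hji
  · exact h i j hij
  · obtain ⟨k, hk⟩ := exists_ne i
    rcases hk.lt_or_gt with hki | hik
    · obtain ⟨z, -, hz⟩ := h k i hki
      exact ⟨z, hz, hz⟩
    · obtain ⟨z, hz, -⟩ := h i k hik
      exact ⟨z, hz, hz⟩
  · obtain ⟨z, hj, hi⟩ := h j i hji
    exact ⟨z, hi, hj⟩

/-- A single existential quantifier over a Boolean variable shared by p ≥ 2
conjuncts can be replaced by pairwise existentials. -/
theorem stmt_6 {X : Type*} (p : ℕ) (hp : 2 ≤ p)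
    (ρ : Fin p → Bool → X → Prop) (a : X) :
    (∃ y : Bool, ∀ i, ρ i y a) ↔
      (∀ i j : Fin p, i < j → ∃ z : Bool, ρ i z a ∧ ρ j z a) := by
  have : Nontrivial (Fin p) := Fin.nontrivial_iff_two_le.mpr hp
  rw [Bool.exists_forall_iff_forall_exists_and]
  exact ⟨fun h i j _ => h i j, forall_exists_and_of_forall_lt⟩
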